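/- Let f : X → X be a pointwise periodic homeomorphism of a nontrivial compact metric space X (i.e. X has more than one point). Then the induced system (2^X, 2^f) is not topologically transitive. Consequently, (2^X, 2^f) is neither Devaney chaotic nor Auslander–Yorke chaotic. -/

import Mathlib

open TopologicalSpace Metric Set Filter

/-- The induced map on the hyperspace of nonempty compact (= closed) subsets. -/
noncomputable def hyper {X : Type*} [MetricSpace X] (f : X ≃ₜ X) :
    NonemptyCompacts X → NonemptyCompacts X :=
  fun A => ⟨⟨f '' A, A.isCompact.image f.continuous⟩, A.nonempty.image f⟩

/-- `x` is uniformly recurrent for `g`. -/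
def IsUnifRec {α : Type*} [MetricSpace α] (g : α → α) (x : α) : Prop :=
  ∀ ε > (0:ℝ), ∃ N > 0, ∀ k : ℕ, dist (g^[k * N] x) x < ε

/-- `x` is recurrent for `g` (it belongs to its own ω-limit set). -/
def IsRec {α : Type*} [MetricSpace α] (g : α → α) (x : α) : Prop :=
  ∀ ε > (0:ℝ), ∀ m : ℕ, ∃ n ≥ m, 0 < n ∧ dist (g^[n] x) x < ε

/-- `x` is almost periodic for `g`. -/
def IsAP {α : Type*} [MetricSpace α] (g : α → α) (x : α) : Prop :=
  ∀ ε > (0:ℝ), ∃ N : ℕ, ∀ n : ℕ, ∃ i < N, dist (g^[n + i] x) x < ε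

/-- `(x, y)` is an asymptotic pair for `g`. -/
def Asymp {α : Type*} [MetricSpace α] (g : α → α) (x y : α) : Prop :=
  Filter.Tendsto (fun n => dist (g^[n] x) (g^[n] y)) Filter.atTop (nhds 0)

/-- `(x, y)` is a proximal pair for `g`. -/
def Proximal {α : Type*} [MetricSpace α] (g : α → α) (x y : α) : Prop :=
  ∀ ε > (0:ℝ), ∀ m : ℕ, ∃ n ≥ m, dist (g^[n] x) (g^[n] y) < ε

/-- The ω-limit set of `x` under `g`. -/
def omegaSet {α : Type*} [MetricSpace α] (g : α → α) (x : α) : Set α :=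
  {y | ∀ ε > (0:ℝ), ∀ m : ℕ, ∃ n ≥ m, dist (g^[n] x) y < ε}

/-- `M` is a minimal set of `g`. -/
def IsMinimalFor {α : Type*} [TopologicalSpace α] (g : α → α) (M : Set α) : Prop :=
  M.Nonempty ∧ IsClosed M ∧ Set.MapsTo g M M ∧
    ∀ M' ⊆ M, M'.Nonempty → IsClosed M' → Set.MapsTo g M' M' → M' = M

/-- `A` is internally chain transitive for `g`. -/
def ICT {α : Type*} [MetricSpace α] (g : α → α) (A : Set α) : Prop :=
  ∀ a ∈ A, ∀ b ∈ A, ∀ ε > (0:ℝ), ∃ N : ℕ, 1 ≤ N ∧ ∃ c : ℕ → α,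
    c 0 = a ∧ c N = b ∧ (∀ i ≤ N, c i ∈ A) ∧ ∀ i < N, dist (g (c i)) (c (i + 1)) < ε

open Function
open scoped Topology

/-!
By Baire's theorem some set `{x | f^[N] x = x}` has nonempty interior, so near a point `x₀` of
that interior every iterate `f^[n]` agrees with one of the finitely many maps `f^[n % N]`; hence
the iterates of `f` are equicontinuous at `x₀`. A compact set `A` Hausdorff-close to `{x₀}`
therefore has all its images `f^[n] A` of small diameter, so none of them comes Hausdorff-close
to the whole space `X`, which has positive diameter.
-/

theorem exists_nonempty_interior_setOf_isPeriodicPt {X : Type*} [TopologicalSpace X] [T2Space X]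
    [BaireSpace X] [Nonempty X] {f : X → X} (hf : Continuous f)
    (hper : ∀ x, x ∈ periodicPts f) :
    ∃ N > 0, (interior {x | IsPeriodicPt f N x}).Nonempty := by
  have hclosed : ∀ n : ℕ, IsClosed {x | IsPeriodicPt f (n + 1) x} := fun n =>
    isClosed_fixedPoints (hf.iterate _)
  have hcover : ⋃ n : ℕ, {x | IsPeriodicPt f (n + 1) x} = univ := by
    refine eq_univ_of_forall fun x => ?_
    obtain ⟨n, hn, hx⟩ := hper x
    exact mem_iUnion.2 ⟨n - 1, by rwa [mem_ofPred_eq, Nat.sub_add_cancel hn]⟩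
  obtain ⟨n, hn⟩ := nonempty_interior_of_iUnion_of_closed hclosed hcover
  exact ⟨n + 1, n.succ_pos, hn⟩

theorem equicontinuousAt_iterate_of_eventually_isPeriodicPt {X : Type*} [UniformSpace X]
    {f : X → X} (hf : Continuous f) {N : ℕ} (hN : 0 < N) {x₀ : X}
    (h : ∀ᶠ x in 𝓝 x₀, IsPeriodicPt f N x) :
    EquicontinuousAt (fun n : ℕ => f^[n]) x₀ := by
  have hfinite : EquicontinuousAt (fun s : Fin N => f^[s]) x₀ :=
    equicontinuousAt_finite.2 fun s => (hf.iterate s).continuousAt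
  intro U hU
  filter_upwards [hfinite U hU, h] with x hx hxper n
  rw [← hxper.iterate_mod_apply, ← h.self_of_nhds.iterate_mod_apply]
  exact hx ⟨n % N, Nat.mod_lt n hN⟩

section Hyperspace

variable {X : Type*} [MetricSpace X]

theorem coe_hyper_iterate (f : X ≃ₜ X) (n : ℕ) (A : NonemptyCompacts X) :
    (((hyper f)^[n] A : NonemptyCompacts X) : Set X) = (⇑f)^[n] '' A := by
  induction n generalizing A with
  | zero => simp
  | succ n ih =>
    rw [iterate_succ_apply, ih, iterate_succ, image_comp]
    rfl

theorem NonemptyCompacts.exists_dist_lt_of_dist_lt {A B : NonemptyCompacts X} {r : ℝ}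
    (h : dist A B < r) {a : X} (ha : a ∈ A) : ∃ b ∈ B, dist a b < r :=
  exists_dist_lt_of_hausdorffDist_lt ha h (edist_ne_top A B)

theorem NonemptyCompacts.dist_lt_of_subset_ball_of_dist_top_lt [CompactSpace X] [Nonempty X]
    {B : NonemptyCompacts X} {c : X} {r s : ℝ} (hB : (B : Set X) ⊆ ball c r)
    (h : dist B ⊤ < s) (y : X) : dist y c < s + r := by
  rw [dist_comm] at h
  obtain ⟨b, hb, hyb⟩ :=
    exists_dist_lt_of_dist_lt h (show y ∈ (⊤ : NonemptyCompacts X) from trivial)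
  calc dist y c ≤ dist y b + dist b c := dist_triangle y b c
    _ < s + r := add_lt_add hyb (hB hb)

theorem not_transitive_hyper_of_equicontinuousAt [CompactSpace X] [Nontrivial X] (f : X ≃ₜ X)
    {x₀ : X} (h : EquicontinuousAt (fun n : ℕ => (⇑f)^[n]) x₀) :
    ¬ (∀ U V : Set (NonemptyCompacts X), IsOpen U → IsOpen V →
        U.Nonempty → V.Nonempty →
        ∃ n : ℕ, ((hyper f)^[n] ⁻¹' U ∩ V).Nonempty) := by
  intro H
  obtain ⟨u, v, huv⟩ := exists_pair_ne X
  have hδ : 0 < dist u v := dist_pos.2 huv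
  obtain ⟨ρ, hρ, hclose⟩ := Metric.equicontinuousAt_iff.1 h (dist u v / 8) (by positivity)
  obtain ⟨n, A, hAU, hAV⟩ :=
    H (ball ⊤ (dist u v / 4)) (ball {x₀} ρ) isOpen_ball isOpen_ball
    ⟨⊤, mem_ball_self (by positivity)⟩ ⟨{x₀}, mem_ball_self hρ⟩
  have hsmall : ((hyper f)^[n] A : Set X) ⊆ ball ((⇑f)^[n] x₀) (dist u v / 8) := by
    rw [coe_hyper_iterate]
    rintro _ ⟨a, ha, rfl⟩
    obtain ⟨b, hb, hab⟩ := NonemptyCompacts.exists_dist_lt_of_dist_lt (mem_ball.1 hAV) ha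
    rw [(NonemptyCompacts.mem_singleton b x₀).1 hb] at hab
    exact mem_ball'.2 (hclose a hab n)
  have hu := NonemptyCompacts.dist_lt_of_subset_ball_of_dist_top_lt hsmall (mem_ball.1 hAU) u
  have hv := NonemptyCompacts.dist_lt_of_subset_ball_of_dist_top_lt hsmall (mem_ball.1 hAU) v
  linarith [dist_triangle_right u v ((⇑f)^[n] x₀)]

end Hyperspace

theorem stmt17 {X : Type*} [MetricSpace X] [CompactSpace X] [Nontrivial X]
    (f : X ≃ₜ X) (hper : ∀ x : X, ∃ n > 0, (⇑f)^[n] x = x) :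
    ¬ (∀ U V : Set (NonemptyCompacts X), IsOpen U → IsOpen V →
        U.Nonempty → V.Nonempty →
        ∃ n : ℕ, ((hyper f)^[n] ⁻¹' U ∩ V).Nonempty) := by
  obtain ⟨N, hN, x₀, hx₀⟩ := exists_nonempty_interior_setOf_isPeriodicPt f.continuous hper
  exact not_transitive_hyper_of_equicontinuousAt f
    (equicontinuousAt_iterate_of_eventually_isPeriodicPt f.continuous hN
      (mem_interior_iff_mem_nhds.1 hx₀))
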